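/- arXiv:1809.04769 — 2 statements merged into one kernel-verified Lean document; each statement's English description precedes it below -/
import Mathlib

section
/- For any direct product G = K_{n1} × ··· × K_{nt} of t ≥ 2 complete graphs (each n_i ≥ 2), the domination number satisfies γ(G) ≤ 3·2^{t-2}. -/
open SimpleGraph

def unitaryCayley (n : ℕ) : SimpleGraph (ZMod n) where
  Adj a b := a ≠ b ∧ IsUnit (a - b)
  symm := ⟨by
    rintro a b ⟨h1, h2⟩
    refine ⟨h1.symm, ?_⟩
    rw [← neg_sub]
    exact h2.neg⟩
  loopless := ⟨by rintro a ⟨h, _⟩; exact h rfl⟩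

def tensorProd {α β : Type*} (G : SimpleGraph α) (H : SimpleGraph β) :
    SimpleGraph (α × β) where
  Adj x y := G.Adj x.1 y.1 ∧ H.Adj x.2 y.2
  symm := ⟨by rintro x y ⟨h1, h2⟩; exact ⟨h1.symm, h2.symm⟩⟩
  loopless := ⟨by rintro x ⟨h, _⟩; exact G.loopless.irrefl _ h⟩

def tensorPi {ι : Type*} {α : ι → Type*} (G : ∀ i, SimpleGraph (α i)) :
    SimpleGraph (∀ i, α i) where
  Adj x y := x ≠ y ∧ ∀ i, (G i).Adj (x i) (y i)
  symm := ⟨by rintro x y ⟨h1, h2⟩; exact ⟨h1.symm, fun i => (h2 i).symm⟩⟩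
  loopless := ⟨by rintro x ⟨h, _⟩; exact h rfl⟩

/-- The balanced complete multipartite graph `K[a,b]`: `b` parts of size `a`. -/
def multipartite (a b : ℕ) : SimpleGraph (Fin a × Fin b) where
  Adj x y := x.2 ≠ y.2
  symm := ⟨by rintro x y h; exact h.symm⟩
  loopless := ⟨by rintro x h; exact h rfl⟩

def prodComplete2 (n1 n2 : ℕ) : SimpleGraph (Fin n1 × Fin n2) :=
  tensorProd (completeGraph (Fin n1)) (completeGraph (Fin n2))

def prodComplete3 (n1 n2 n3 : ℕ) : SimpleGraph (Fin n1 × Fin n2 × Fin n3) :=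
  tensorProd (completeGraph (Fin n1)) (prodComplete2 n2 n3)

def prodCompletePi (t : ℕ) (n : Fin t → ℕ) : SimpleGraph (∀ i, Fin (n i)) :=
  tensorPi fun i => completeGraph (Fin (n i))

def prodMultipartite (t : ℕ) (a b : Fin t → ℕ) :
    SimpleGraph (∀ i, Fin (a i) × Fin (b i)) :=
  tensorPi fun i => multipartite (a i) (b i)

def IsDominating {V : Type*} (G : SimpleGraph V) (S : Set V) : Prop :=
  ∀ v, v ∈ S ∨ ∃ u ∈ S, G.Adj u v

def IsTotalDominating {V : Type*} (G : SimpleGraph V) (S : Set V) : Prop :=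
  ∀ v, ∃ u ∈ S, G.Adj u v

def IsIndep {V : Type*} (G : SimpleGraph V) (S : Set V) : Prop :=
  ∀ u ∈ S, ∀ v ∈ S, ¬ G.Adj u v

def closedNbhd {V : Type*} (G : SimpleGraph V) (v : V) : Set V :=
  {u | u = v ∨ G.Adj v u}

def IsIrredundant {V : Type*} (G : SimpleGraph V) (S : Set V) : Prop :=
  ∀ v ∈ S, ∃ u ∈ closedNbhd G v, ∀ w ∈ S, w ≠ v → u ∉ closedNbhd G w

noncomputable def domNum {V : Type*} (G : SimpleGraph V) : ℕ :=
  sInf {k | ∃ S : Set V, IsDominating G S ∧ S.ncard = k}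

noncomputable def totalDomNum {V : Type*} (G : SimpleGraph V) : ℕ :=
  sInf {k | ∃ S : Set V, IsTotalDominating G S ∧ S.ncard = k}

noncomputable def irNum {V : Type*} (G : SimpleGraph V) : ℕ :=
  sInf {k | ∃ S : Set V, Maximal (IsIrredundant G) S ∧ S.ncard = k}

noncomputable def iNum {V : Type*} (G : SimpleGraph V) : ℕ :=
  sInf {k | ∃ S : Set V, Maximal (IsIndep G) S ∧ S.ncard = k}

noncomputable def alphaNum {V : Type*} (G : SimpleGraph V) : ℕ :=
  sSup {k | ∃ S : Set V, IsIndep G S ∧ S.ncard = k}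

noncomputable def upperDomNum {V : Type*} (G : SimpleGraph V) : ℕ :=
  sSup {k | ∃ S : Set V, Minimal (IsDominating G) S ∧ S.ncard = k}

noncomputable def IRNum {V : Type*} (G : SimpleGraph V) : ℕ :=
  sSup {k | ∃ S : Set V, IsIrredundant G S ∧ S.ncard = k}

/-- The Jacobsthal function: least `m > 0` such that any `m` consecutive integers
contain one coprime to `n`. -/
noncomputable def jacobsthal (n : ℕ) : ℕ :=
  sInf {m | 0 < m ∧ ∀ x : ℤ, ∃ i : ℕ, i < m ∧ Int.gcd (x + i) n = 1}

/-!
Identify `{0,1}^t` with words over `𝔽₂`. Given a vertex `v`, the word `w` with `w i = 1` exactly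
where `v i = 0` differs from `v` in every coordinate. If `w` lies in a code `C`, then either `v`
is the 0/1-vertex of `w + 1`, or some `v j ≥ 2` and the word obtained by flipping `w j` is still adjacent to `v`.
So the 0/1-vertices outside `C` dominate as soon as `C` has minimum distance at least 2 and
contains no complementary pair. The code `{w | w 0 = 0 ∧ ∑ i, w i = 0}` qualifies and has
`2 ^ (t - 2)` words, leaving `3 * 2 ^ (t - 2)` vertices.
-/

theorem domNum_le_ncard {V : Type*} {G : SimpleGraph V} {S : Set V} (hS : IsDominating G S) :
    domNum G ≤ S.ncard :=
  Nat.sInf_le ⟨S, hS, rfl⟩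

namespace BinaryWord

variable {ι : Type*} {n : ι → ℕ}

def toVertex (hn : ∀ i, 2 ≤ n i) (w : ι → ZMod 2) : ∀ i, Fin (n i) :=
  fun i => ⟨(w i).val, (w i).val_lt.trans_le (hn i)⟩

theorem adj_toVertex [Nonempty ι] (hn : ∀ i, 2 ≤ n i) {w : ι → ZMod 2} {v : ∀ i, Fin (n i)}
    (h : ∀ i, (w i).val ≠ (v i).val) :
    (tensorPi fun i => completeGraph (Fin (n i))).Adj (toVertex hn w) v :=
  have hne : ∀ i, toVertex hn w i ≠ v i := fun i hi => h i (congrArg Fin.val hi)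
  ⟨fun hv => hne (Classical.arbitrary ι) (congrFun hv _), hne⟩

theorem isDominating_toVertex_image_compl [Nonempty ι] [DecidableEq ι] (hn : ∀ i, 2 ≤ n i)
    {C : Set (ι → ZMod 2)} (hflip : ∀ w ∈ C, ∀ j, w + Pi.single j 1 ∉ C)
    (hcompl : ∀ w ∈ C, w + 1 ∉ C) :
    IsDominating (tensorPi fun i => completeGraph (Fin (n i))) (toVertex hn '' Cᶜ) := by
  intro v
  set w : ι → ZMod 2 := fun i => if (v i).val = 0 then 1 else 0
  have hw : ∀ i, (w i).val ≠ (v i).val := fun i => by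
    by_cases h : (v i).val = 0
    · simp [w, h]
    · simpa [w, h] using Ne.symm h
  by_cases hwC : w ∈ C
  swap
  · exact .inr ⟨_, ⟨w, hwC, rfl⟩, adj_toVertex hn hw⟩
  by_cases hsmall : ∀ i, (v i).val < 2
  · refine .inl ⟨w + 1, hcompl w hwC, funext fun i => Fin.ext ?_⟩
    change (w i + 1).val = (v i).val
    have hvi := hsmall i
    by_cases h : (v i).val = 0
    · simp only [w, h, if_true]
      decide
    · simp only [w, h, if_false, zero_add, ZMod.val_one]
      omega
  · obtain ⟨j, hj⟩ := not_forall.mp hsmall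
    refine .inr ⟨_, ⟨w + Pi.single j 1, hflip w hwC j, rfl⟩, adj_toVertex hn fun i => ?_⟩
    by_cases hij : i = j
    · subst hij
      exact ((ZMod.val_lt _).trans_le (not_lt.mp hj)).ne
    · simpa [Pi.single_apply, hij] using hw i

def evenCode [Fintype ι] (i₀ : ι) : Set (ι → ZMod 2) :=
  {w | w i₀ = 0 ∧ ∑ i, w i = 0}

theorem add_single_notMem_evenCode [Fintype ι] [DecidableEq ι] {i₀ : ι} {w : ι → ZMod 2}
    (hw : w ∈ evenCode i₀) (j : ι) : w + Pi.single j 1 ∉ evenCode i₀ := fun h => by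
  simpa [Finset.sum_add_distrib, hw.2] using h.2

theorem add_one_notMem_evenCode [Fintype ι] {i₀ : ι} {w : ι → ZMod 2} (hw : w ∈ evenCode i₀) :
    w + 1 ∉ evenCode i₀ := fun h => by
  simpa [hw.1] using h.1

theorem two_pow_le_ncard_evenCode (m : ℕ) : 2 ^ m ≤ (evenCode (0 : Fin (m + 2))).ncard := by
  have hcons : Set.InjOn (fun g : Fin m → ZMod 2 => (Fin.cons 0 (Fin.cons (-∑ i, g i) g) :
      Fin (m + 2) → ZMod 2)) Set.univ := fun g _ g' _ h => by
    simpa using congrArg (fun w : Fin (m + 2) → ZMod 2 => Fin.tail (Fin.tail w)) h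
  have hmem : ∀ g ∈ (Set.univ : Set (Fin m → ZMod 2)),
      (Fin.cons 0 (Fin.cons (-∑ i, g i) g) : Fin (m + 2) → ZMod 2) ∈ evenCode 0 :=
    fun g _ => ⟨rfl, by rw [Fin.sum_cons, Fin.sum_cons, neg_add_cancel, add_zero]⟩
  simpa using Set.ncard_le_ncard_of_injOn _ hmem hcons

theorem ncard_compl_evenCode_le (m : ℕ) : (evenCode (0 : Fin (m + 2)))ᶜ.ncard ≤ 3 * 2 ^ m := by
  have hsum := Set.ncard_add_ncard_compl (evenCode (0 : Fin (m + 2)))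
  have hcard := two_pow_le_ncard_evenCode m
  simp only [Nat.card_eq_fintype_card, Fintype.card_fun, ZMod.card, Fintype.card_fin] at hsum
  rw [pow_add] at hsum
  omega

end BinaryWord

open BinaryWord

theorem stmt11 (t : ℕ) (ht : 2 ≤ t) (n : Fin t → ℕ) (hn : ∀ i, 2 ≤ n i) :
    domNum (prodCompletePi t n) ≤ 3 * 2 ^ (t - 2) := by
  obtain ⟨m, rfl⟩ : ∃ m, t = m + 2 := ⟨t - 2, by omega⟩
  have hdom := isDominating_toVertex_image_compl hn (C := evenCode 0)
    (fun _ hw => add_single_notMem_evenCode hw) (fun _ hw => add_one_notMem_evenCode hw)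
  calc domNum (prodCompletePi (m + 2) n)
      ≤ (toVertex hn '' (evenCode (0 : Fin (m + 2)))ᶜ).ncard := domNum_le_ncard hdom
    _ ≤ (evenCode (0 : Fin (m + 2)))ᶜ.ncard := Set.ncard_image_le
    _ ≤ 3 * 2 ^ (m + 2 - 2) := by simpa using ncard_compl_evenCode_le m
end

section
/- If n = p_1^{a_1} ··· p_t^{a_t} with primes p_1 < ··· < p_t, then the upper irredundance number of the unitary Cayley graph satisfies IR(X_n) ≤ (1 + 2·(p_1/p_t)·(1/(p_1^{a_1-1} ··· p_t^{a_t-1}))) · α(X_n), where α(X_n) = n/p_1 is the independence number. -/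
open SimpleGraph

/-!
Reducing modulo the primes `p i`, two residues are adjacent in `X_n` iff they differ modulo
every `p i`. Translates of an independent set by `0, 1, …, p₁ - 1` are disjoint, since
differences below the least prime factor are units; hence `α(X_n) ≤ n / p₁`, and the multiples of
`p₁` attain this.

For an irredundant set `S` choose a private neighbour `u v ∈ N[v]` of each `v ∈ S`. The `v` with
`u v = v` form an independent set. For the others, `u v` differs from `v` modulo every prime,
while it agrees with every other `w ∈ S` modulo some prime. So if `u v ≡ u w` modulo every prime
except `p_t`, then `u v ≡ w (mod p_t)`, and three such vertices would force `u v ≡ v (mod p_t)`.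
The map `v ↦ (u v mod p_i)_{i < t}` is therefore at most two-to-one, leaving at most
`2 ∏_{i<t} p_i = 2 (p₁ / p_t) (n / p₁) / ∏ p_i ^ (a_i - 1)` such vertices.
-/

section Irredundant

open Finset

variable {V ι : Type*} {W : ι → Type*} {G : SimpleGraph V} {S : Set V} {u : V → V}

theorem isIndep_setOf_private_eq_self
    (hpriv : ∀ v ∈ S, ∀ w ∈ S, w ≠ v → u v ∉ closedNbhd G w) :
    IsIndep G {v ∈ S | u v = v} := by
  rintro v ⟨hvS, hv⟩ w ⟨hwS, -⟩ hadj
  exact hpriv v hvS w hwS (G.ne_of_adj hadj).symm (Or.inr (by rw [hv]; exact hadj.symm))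

variable (r : ∀ i, V → W i)

theorem apply_private_eq_of_forall_ne [DecidableEq ι]
    (hadj : ∀ x y, G.Adj x y ↔ x ≠ y ∧ ∀ i, r i x ≠ r i y)
    (hu : ∀ v ∈ S, u v ∈ closedNbhd G v)
    (hpriv : ∀ v ∈ S, ∀ w ∈ S, w ≠ v → u v ∉ closedNbhd G w) {v w : V}
    (hv : v ∈ {v ∈ S | u v ≠ v}) (hw : w ∈ {v ∈ S | u v ≠ v}) (hvw : w ≠ v) (j : ι)
    (hrest : ∀ i ≠ j, r i (u v) = r i (u w)) : r j (u v) = r j w := by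
  have hsep : ∀ x ∈ {v ∈ S | u v ≠ v}, ∀ i, r i x ≠ r i (u x) := fun x ⟨hxS, hx⟩ =>
    ((hadj x (u x)).1 ((hu x hxS).resolve_left hx)).2
  obtain ⟨i, hi⟩ : ∃ i, r i w = r i (u v) := by
    have hnot := hpriv v hv.1 w hw.1 hvw
    simp only [closedNbhd, Set.mem_ofPred_eq, not_or, hadj, not_and, not_forall, not_not] at hnot
    exact hnot.2 (Ne.symm hnot.1)
  by_cases hij : i = j
  · exact hij ▸ hi.symm
  · exact absurd (hi.trans (hrest i hij)) (hsep w hw i)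

theorem ncard_setOf_private_ne_self_le [Finite V] [Fintype ι] [DecidableEq ι]
    [∀ i, Fintype (W i)] (hadj : ∀ x y, G.Adj x y ↔ x ≠ y ∧ ∀ i, r i x ≠ r i y)
    (hu : ∀ v ∈ S, u v ∈ closedNbhd G v)
    (hpriv : ∀ v ∈ S, ∀ w ∈ S, w ≠ v → u v ∉ closedNbhd G w) (j : ι) :
    {v ∈ S | u v ≠ v}.ncard ≤ 2 * ∏ i ∈ univ.erase j, Fintype.card (W i) := by
  classical
  set B := {v ∈ S | u v ≠ v}
  have hB := B.toFinite
  let g : V → ∀ i : {i // i ≠ j}, W i := fun v i => r i (u v)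
  have hfiber : ∀ y ∈ (univ : Finset (∀ i : {i // i ≠ j}, W i)),
      #{v ∈ hB.toFinset | g v = y} ≤ 2 := by
    intro y _
    by_contra! h3
    obtain ⟨v₁, h₁, v₂, h₂, v₃, h₃, h₁₂, h₁₃, h₂₃⟩ := two_lt_card.1 h3
    simp only [mem_filter, Set.Finite.mem_toFinset] at h₁ h₂ h₃
    have key : ∀ {v w}, v ∈ B ∧ g v = y → w ∈ B ∧ g w = y → w ≠ v → r j (u v) = r j w :=
      fun hv hw hvw => apply_private_eq_of_forall_ne r hadj hu hpriv hv.1 hw.1 hvw j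
        fun i hi => congrFun (hv.2.trans hw.2.symm) ⟨i, hi⟩
    refine ((hadj _ _).1 ((hu v₁ h₁.1.1).resolve_left h₁.1.2)).2 j ?_
    rw [← key h₃ h₁ h₁₃, key h₃ h₂ h₂₃, key h₁ h₂ h₁₂.symm]
  calc B.ncard = #hB.toFinset := Set.ncard_eq_toFinset_card B hB
    _ ≤ 2 * #(univ : Finset (∀ i : {i // i ≠ j}, W i)) :=
      card_le_mul_card_image_of_maps_to (fun _ _ => mem_univ _) 2 hfiber
    _ = 2 * ∏ i ∈ univ.erase j, Fintype.card (W i) := by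
      rw [card_univ, Fintype.card_pi,
        prod_subtype (univ.erase j) (p := (· ≠ j)) (fun _ => by simp) fun i => Fintype.card (W i)]

theorem IsIrredundant.ncard_le_add [Finite V] [Fintype ι] [DecidableEq ι] [∀ i, Fintype (W i)]
    (hadj : ∀ x y, G.Adj x y ↔ x ≠ y ∧ ∀ i, r i x ≠ r i y) (hS : IsIrredundant G S) (j : ι)
    {m : ℕ} (hα : ∀ T, IsIndep G T → T.ncard ≤ m) :
    S.ncard ≤ m + 2 * ∏ i ∈ univ.erase j, Fintype.card (W i) := by
  choose! u hu hpriv using hS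
  calc S.ncard = ({v ∈ S | u v = v} ∪ {v ∈ S | u v ≠ v}).ncard := by
        rw [← Set.sep_or]; simp [em]
    _ ≤ {v ∈ S | u v = v}.ncard + {v ∈ S | u v ≠ v}.ncard := Set.ncard_union_le _ _
    _ ≤ m + 2 * ∏ i ∈ univ.erase j, Fintype.card (W i) :=
      add_le_add (hα _ (isIndep_setOf_private_eq_self hpriv))
        (ncard_setOf_private_ne_self_le r hadj hu hpriv j)

end Irredundant

section UnitaryCayley

theorem isUnit_natCast_of_lt_minFac {n k : ℕ} (hk : k ≠ 0) (hkn : k < n.minFac) :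
    IsUnit (k : ZMod n) :=
  (ZMod.isUnit_iff_coprime k n).2 (Nat.coprime_of_lt_minFac hk hkn).symm

theorem IsIndep.ncard_le_div_minFac {n : ℕ} (hn : 1 < n) {S : Set (ZMod n)}
    (hS : IsIndep (unitaryCayley n) S) : S.ncard ≤ n / n.minFac := by
  have : Fact (1 < n) := ⟨hn⟩
  let f : S × Fin n.minFac → ZMod n := fun x => x.1 + (x.2 : ℕ)
  have hf : Function.Injective f := by
    rintro ⟨⟨s₁, hs₁⟩, k₁⟩ ⟨⟨s₂, hs₂⟩, k₂⟩ h
    wlog hle : k₁ ≤ k₂ generalizing s₁ s₂ k₁ k₂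
    · exact (this k₂ s₂ hs₂ k₁ s₁ hs₁ h.symm (le_of_not_ge hle)).symm
    have hsub : s₁ - s₂ = ((k₂ - k₁ : ℕ) : ZMod n) := by
      simp only [f] at h
      rw [Nat.cast_sub hle]
      linear_combination h
    obtain rfl : k₁ = k₂ := by
      by_contra hne
      have hunit : IsUnit (s₁ - s₂) := hsub ▸ isUnit_natCast_of_lt_minFac
        (by omega) ((Nat.sub_le _ _).trans_lt k₂.2)
      have hs : s₁ ≠ s₂ := fun h => by simp [h] at hunit
      exact hS s₁ hs₁ s₂ hs₂ ⟨hs, hunit⟩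
    simpa [f] using h
  have := Nat.card_le_card_of_injective f hf
  rwa [Nat.card_prod, Nat.card_coe_set_eq, Nat.card_eq_fintype_card, Fintype.card_fin,
    Nat.card_zmod, ← Nat.le_div_iff_mul_le (Nat.minFac_pos n)] at this

theorem isIndep_setOf_castHom_eq_zero {n d : ℕ} (hd : d ∣ n) [Nontrivial (ZMod d)] :
    IsIndep (unitaryCayley n) {x | ZMod.castHom hd (ZMod d) x = 0} := by
  rintro x (hx : _ = 0) y (hy : _ = 0) ⟨-, hunit⟩
  have := hunit.map (ZMod.castHom hd (ZMod d))
  rw [map_sub, hx, hy, sub_self] at this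
  exact not_isUnit_zero this

theorem ncard_setOf_castHom_eq_zero {n d : ℕ} [NeZero n] (hd : d ∣ n) :
    {x : ZMod n | ZMod.castHom hd (ZMod d) x = 0}.ncard = n / d := by
  have := AddSubgroup.card_mul_index (ZMod.castHom hd (ZMod d)).toAddMonoidHom.ker
  rw [AddSubgroup.index_ker, AddMonoidHom.range_eq_top.2 (ZMod.ringHom_surjective _),
    AddSubgroup.card_top, Nat.card_zmod, Nat.card_zmod] at this
  have hd0 : d ≠ 0 := by rintro rfl; exact NeZero.ne n (zero_dvd_iff.1 hd)
  exact Nat.eq_div_of_mul_eq_left hd0 this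

theorem alphaNum_unitaryCayley {n : ℕ} (hn : 1 < n) :
    alphaNum (unitaryCayley n) = n / n.minFac := by
  have : NeZero n := ⟨by omega⟩
  have : Fact n.minFac.Prime := ⟨Nat.minFac_prime (by omega)⟩
  refine IsGreatest.csSup_eq ⟨⟨_, isIndep_setOf_castHom_eq_zero (Nat.minFac_dvd n),
    ncard_setOf_castHom_eq_zero _⟩, ?_⟩
  rintro k ⟨S, hS, rfl⟩
  exact hS.ncard_le_div_minFac hn

end UnitaryCayley

section PrimeFactorization

open Finset

variable {ι : Type*} [Fintype ι] {p a : ι → ℕ} {n : ℕ}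

theorem dvd_of_eq_prod_pow (ha : ∀ i, 1 ≤ a i) (hn : n = ∏ i, p i ^ a i) (i : ι) : p i ∣ n :=
  hn ▸ (dvd_pow_self (p i) (by have := ha i; omega)).trans (dvd_prod_of_mem _ (mem_univ i))

theorem one_lt_of_eq_prod_pow (hp : ∀ i, (p i).Prime) (ha : ∀ i, 1 ≤ a i)
    (hn : n = ∏ i, p i ^ a i) (i : ι) : 1 < n :=
  (hp i).one_lt.trans_le
    (Nat.le_of_dvd (hn ▸ prod_pos fun i _ => pow_pos (hp i).pos _) (dvd_of_eq_prod_pow ha hn i))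

theorem coprime_iff_forall_not_dvd_of_eq_prod_pow (hp : ∀ i, (p i).Prime) (ha : ∀ i, 1 ≤ a i)
    (hn : n = ∏ i, p i ^ a i) (m : ℕ) : m.Coprime n ↔ ∀ i, ¬ p i ∣ m := by
  simp only [hn, Nat.coprime_prod_right_iff, mem_univ, true_implies]
  refine forall_congr' fun i => ?_
  rw [Nat.coprime_pow_right_iff (by have := ha i; omega), Nat.coprime_comm,
    (hp i).coprime_iff_not_dvd]

theorem minFac_eq_of_eq_prod_pow (hp : ∀ i, (p i).Prime) (ha : ∀ i, 1 ≤ a i)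
    (hn : n = ∏ i, p i ^ a i) {i₀ : ι} (hmin : ∀ i, p i₀ ≤ p i) : n.minFac = p i₀ := by
  have hn1 : n ≠ 1 := (one_lt_of_eq_prod_pow hp ha hn i₀).ne'
  refine le_antisymm (Nat.minFac_le_of_dvd (hp i₀).two_le (dvd_of_eq_prod_pow ha hn i₀)) ?_
  have hnot : ¬ n.minFac.Coprime n := fun h =>
    (Nat.minFac_prime hn1).one_lt.ne' (Nat.Coprime.eq_one_of_dvd h (Nat.minFac_dvd n))
  obtain ⟨i, hi⟩ := not_forall_not.1
    (mt (coprime_iff_forall_not_dvd_of_eq_prod_pow hp ha hn _).2 hnot)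
  exact (hmin i).trans_eq ((Nat.prime_dvd_prime_iff_eq (hp i) (Nat.minFac_prime hn1)).1 hi)

theorem isUnit_iff_forall_castHom_ne_zero [NeZero n] (hp : ∀ i, (p i).Prime)
    (ha : ∀ i, 1 ≤ a i) (hn : n = ∏ i, p i ^ a i) (x : ZMod n) :
    IsUnit x ↔ ∀ i, ZMod.castHom (dvd_of_eq_prod_pow ha hn i) (ZMod (p i)) x ≠ 0 := by
  rw [← ZMod.natCast_zmod_val x, ZMod.isUnit_iff_coprime,
    coprime_iff_forall_not_dvd_of_eq_prod_pow hp ha hn]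
  simp only [map_natCast, ne_eq, ZMod.natCast_eq_zero_iff]

theorem unitaryCayley_adj_iff_of_eq_prod_pow [NeZero n] (hp : ∀ i, (p i).Prime)
    (ha : ∀ i, 1 ≤ a i) (hn : n = ∏ i, p i ^ a i) (x y : ZMod n) :
    (unitaryCayley n).Adj x y ↔ x ≠ y ∧ ∀ i,
      ZMod.castHom (dvd_of_eq_prod_pow ha hn i) (ZMod (p i)) x ≠
        ZMod.castHom (dvd_of_eq_prod_pow ha hn i) (ZMod (p i)) y := by
  simp only [unitaryCayley, isUnit_iff_forall_castHom_ne_zero hp ha hn, map_sub, sub_ne_zero]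

theorem IRNum_unitaryCayley_le [DecidableEq ι] (hp : ∀ i, (p i).Prime) (ha : ∀ i, 1 ≤ a i)
    (hn : n = ∏ i, p i ^ a i) (j : ι) :
    IRNum (unitaryCayley n) ≤ alphaNum (unitaryCayley n) + 2 * ∏ i ∈ univ.erase j, p i := by
  have : ∀ i, NeZero (p i) := fun i => ⟨(hp i).ne_zero⟩
  have hn1 := one_lt_of_eq_prod_pow hp ha hn j
  have : NeZero n := ⟨by omega⟩
  rw [alphaNum_unitaryCayley hn1]
  refine csSup_le' ?_
  rintro k ⟨S, hS, rfl⟩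
  simpa only [ZMod.card] using hS.ncard_le_add _ (unitaryCayley_adj_iff_of_eq_prod_pow hp ha hn) j
    fun T hT => hT.ncard_le_div_minFac hn1

end PrimeFactorization

open Finset

theorem prod_pow_eq_prod_pow_pred_mul_prod {ι M : Type*} [CommMonoid M] (s : Finset ι)
    (x : ι → M) {a : ι → ℕ} (ha : ∀ i ∈ s, 1 ≤ a i) :
    ∏ i ∈ s, x i ^ a i = (∏ i ∈ s, x i ^ (a i - 1)) * ∏ i ∈ s, x i := by
  rw [← prod_mul_distrib]
  refine prod_congr rfl fun i hi => ?_
  rw [← pow_succ, Nat.sub_add_cancel (ha i hi)]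

theorem stmt17 (t : ℕ) (ht : 1 ≤ t) (p a : Fin t → ℕ)
    (hp : ∀ i, (p i).Prime) (hmono : StrictMono p) (ha : ∀ i, 1 ≤ a i)
    (n : ℕ) (hn : n = ∏ i, p i ^ a i) :
    (alphaNum (unitaryCayley n) : ℝ) = n / p ⟨0, by omega⟩ ∧
    (IRNum (unitaryCayley n) : ℝ) ≤
      (1 + 2 * ((p ⟨0, by omega⟩ : ℝ) / p ⟨t - 1, by omega⟩) *
        (1 / ∏ i, (p i : ℝ) ^ (a i - 1))) * alphaNum (unitaryCayley n) := by
  set i₀ : Fin t := ⟨0, by omega⟩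
  set L : Fin t := ⟨t - 1, by omega⟩
  have hmin : n.minFac = p i₀ :=
    minFac_eq_of_eq_prod_pow hp ha hn fun i => hmono.monotone (show i₀ ≤ i from Nat.zero_le _)
  have hα : (alphaNum (unitaryCayley n) : ℝ) = n / p i₀ := by
    rw [alphaNum_unitaryCayley (one_lt_of_eq_prod_pow hp ha hn i₀), hmin,
      Nat.cast_div (dvd_of_eq_prod_pow ha hn i₀) (by exact_mod_cast (hp i₀).ne_zero)]
  have hnR : (n : ℝ) = (∏ i, (p i : ℝ) ^ (a i - 1)) * (p L * ∏ i ∈ univ.erase L, (p i : ℝ)) := by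
    rw [hn, mul_prod_erase univ (fun i => (p i : ℝ)) (mem_univ L)]
    push_cast
    exact prod_pow_eq_prod_pow_pred_mul_prod _ _ fun i _ => ha i
  have : (0 : ℝ) < p i₀ := by exact_mod_cast (hp i₀).pos
  have : (0 : ℝ) < p L := by exact_mod_cast (hp L).pos
  have : (0 : ℝ) < ∏ i, (p i : ℝ) ^ (a i - 1) :=
    prod_pos fun i _ => pow_pos (by exact_mod_cast (hp i).pos) _
  refine ⟨hα, ?_⟩
  calc (IRNum (unitaryCayley n) : ℝ)
      ≤ alphaNum (unitaryCayley n) + 2 * ∏ i ∈ univ.erase L, (p i : ℝ) := by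
        exact_mod_cast IRNum_unitaryCayley_le hp ha hn L
    _ = _ := by
        rw [hα, hnR]
        field_simp
end
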